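/- For a 2×2 real symmetric positive definite matrix p = [[x, w], [w, y]] with det p = 1, define φ(p) to be the point w/y + i·(1/y) of the upper half-plane. Then for all 2×2 real symmetric positive definite p, q with det p = det q = 1, the Riemannian distance satisfies d(p, q) = √2 · dist_{ℍ}(φ(p), φ(q)), where dist_{ℍ} is the hyperbolic distance on the upper half-plane. -/

import Mathlib

/-!
Conjugating by `p^{-1/2}` turns `q` into a determinant-one positive matrix with eigenvalues
`λ` and `λ⁻¹`, so `d(p, q) = √2 |log λ|`, while
`2 cosh (log λ) = λ + λ⁻¹ = tr (p⁻¹ q)`.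
On the other side, the formula for `cosh` of the hyperbolic distance, written in the entries of
`p` and `q` and simplified with `det p = det q = 1`, is also `tr (p⁻¹ q) / 2`.
-/

open Matrix Filter

open scoped Classical in
/-- The positive semidefinite square root of a matrix (junk value `1` if the matrix is
not positive semidefinite). -/
noncomputable def pdSqrt {n : ℕ} (p : Matrix (Fin n) (Fin n) ℝ) : Matrix (Fin n) (Fin n) ℝ :=
  if h : p.PosSemidef then h.1.eigenvectorUnitary.1 * diagonal ((↑) ∘ (√·) ∘ h.1.eigenvalues) *
    (star h.1.eigenvectorUnitary : Matrix (Fin n) (Fin n) ℝ) else 1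

open scoped Classical in
/-- The eigenvalues of a real symmetric matrix (junk value `0` if the matrix is not
symmetric). -/
noncomputable def symEigenvalues {n : ℕ} (A : Matrix (Fin n) (Fin n) ℝ) : Fin n → ℝ :=
  if h : A.IsHermitian then h.eigenvalues else 0

/-- The Riemannian distance on the space of n×n real symmetric positive definite
matrices: `d(p,q) = √(∑ᵢ (log λᵢ)²)` where `λᵢ` are the eigenvalues of
`p^{-1/2} q p^{-1/2}`. -/
noncomputable def pdDist {n : ℕ} (p q : Matrix (Fin n) (Fin n) ℝ) : ℝ :=
  Real.sqrt (∑ i, Real.log (symEigenvalues ((pdSqrt p)⁻¹ * q * (pdSqrt p)⁻¹) i) ^ 2)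

namespace Matrix

section pdSqrt

variable {n : ℕ} {p : Matrix (Fin n) (Fin n) ℝ}

lemma PosSemidef.pdSqrt_eq (hp : p.PosSemidef) :
    pdSqrt p = hp.1.eigenvectorUnitary.1 * diagonal ((↑) ∘ (√·) ∘ hp.1.eigenvalues) *
      (star hp.1.eigenvectorUnitary : Matrix (Fin n) (Fin n) ℝ) :=
  dif_pos hp

lemma PosSemidef.posSemidef_pdSqrt (hp : p.PosSemidef) : (pdSqrt p).PosSemidef := by
  have hD :
      (diagonal ((↑) ∘ (√·) ∘ hp.1.eigenvalues) : Matrix (Fin n) (Fin n) ℝ).PosSemidef :=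
    posSemidef_diagonal_iff.mpr fun i => by simp
  simpa [hp.pdSqrt_eq, Unitary.coe_star, star_eq_conjTranspose] using
    hD.mul_mul_conjTranspose_same (hp.1.eigenvectorUnitary : Matrix (Fin n) (Fin n) ℝ)

lemma PosSemidef.pdSqrt_mul_self (hp : p.PosSemidef) : pdSqrt p * pdSqrt p = p := by
  set U : Matrix (Fin n) (Fin n) ℝ := (hp.1.eigenvectorUnitary : Matrix (Fin n) (Fin n) ℝ)
  have hU : star U * U = 1 := Unitary.coe_star_mul_self _
  have hD : (diagonal ((↑) ∘ (√·) ∘ hp.1.eigenvalues) : Matrix (Fin n) (Fin n) ℝ) *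
      diagonal ((↑) ∘ (√·) ∘ hp.1.eigenvalues) =
        diagonal ((↑) ∘ hp.1.eigenvalues) := by
    rw [diagonal_mul_diagonal]
    congr 1; funext i
    simp [Real.mul_self_sqrt (hp.eigenvalues_nonneg i)]
  conv_rhs => rw [hp.1.spectral_theorem, Unitary.conjStarAlgAut_apply]
  rw [hp.pdSqrt_eq]
  simp only [Matrix.mul_assoc]
  rw [← Matrix.mul_assoc _ U, hU, Matrix.one_mul, ← Matrix.mul_assoc (diagonal _), hD]
  rfl

end pdSqrt

section Congruence

variable {ι : Type*} [Fintype ι] [DecidableEq ι] {S q : Matrix ι ι ℝ}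

lemma PosSemidef.inv_mul_mul_inv (hq : q.PosSemidef) (hS : S.IsHermitian) :
    (S⁻¹ * q * S⁻¹).PosSemidef := by
  simpa [conjTranspose_nonsing_inv, hS.eq, -conjTranspose_eq_transpose_of_trivial] using
    hq.mul_mul_conjTranspose_same S⁻¹

lemma trace_inv_mul_mul_inv : (S⁻¹ * q * S⁻¹).trace = ((S * S)⁻¹ * q).trace := by
  rw [trace_mul_cycle, mul_inv_rev]

lemma det_inv_mul_mul_inv : (S⁻¹ * q * S⁻¹).det = q.det / (S * S).det := by
  rw [det_mul, det_mul, det_mul, det_nonsing_inv, Ring.inverse_eq_inv']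
  ring

end Congruence

lemma trace_inv_mul_fin_two {p q : Matrix (Fin 2) (Fin 2) ℝ} (hp : p.IsHermitian)
    (hq : q.IsHermitian) (hdp : p.det = 1) :
    (p⁻¹ * q).trace = p 1 1 * q 0 0 + p 0 0 * q 1 1 - 2 * (p 1 0 * q 1 0) := by
  have hp10 : p 0 1 = p 1 0 := hp.apply 1 0
  have hq10 : q 0 1 = q 1 0 := hq.apply 1 0
  rw [inv_def, hdp, Ring.inverse_one, one_smul, adjugate_fin_two, trace_fin_two]
  simp [mul_apply, Fin.sum_univ_two, hp10, hq10]
  ring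

end Matrix

lemma Real.arcosh_add_inv_div_two {l : ℝ} (hl : 0 < l) :
    Real.arcosh ((l + l⁻¹) / 2) = |Real.log l| := by
  rw [← Real.cosh_log hl, ← Real.cosh_abs, Real.arcosh_cosh (abs_nonneg _)]

lemma Matrix.PosSemidef.sqrt_sum_log_sq_eigenvalues_fin_two {A : Matrix (Fin 2) (Fin 2) ℝ}
    (hA : A.PosSemidef) (hdet : A.det = 1) :
    √(∑ i, Real.log (hA.1.eigenvalues i) ^ 2) = √2 * Real.arcosh (A.trace / 2) := by
  set l := hA.1.eigenvalues
  have hprod : l 0 * l 1 = 1 := by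
    simpa [Fin.prod_univ_two, hdet] using hA.1.det_eq_prod_eigenvalues.symm
  have hl0 : 0 < l 0 := (show 0 ≤ l 0 from hA.eigenvalues_nonneg 0).lt_of_ne fun h ↦ by
    rw [← h, zero_mul] at hprod; exact zero_ne_one hprod
  have hl1 : l 1 = (l 0)⁻¹ := eq_inv_of_mul_eq_one_right hprod
  have htr : A.trace = l 0 + l 1 := hA.1.trace_eq_sum_eigenvalues.trans (Fin.sum_univ_two _)
  rw [htr, hl1, Real.arcosh_add_inv_div_two hl0, Fin.sum_univ_two, hl1, Real.log_inv, neg_sq,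
    ← two_mul, Real.sqrt_mul zero_le_two, Real.sqrt_sq_eq_abs]

lemma UpperHalfPlane.two_mul_cosh_dist_eq_trace_inv_mul {z w : UpperHalfPlane}
    {p q : Matrix (Fin 2) (Fin 2) ℝ} (hp : p.PosDef) (hq : q.PosDef)
    (hdp : p.det = 1) (hdq : q.det = 1)
    (hz : (z : ℂ) = p 1 0 / p 1 1 + (1 / p 1 1) * Complex.I)
    (hw : (w : ℂ) = q 1 0 / q 1 1 + (1 / q 1 1) * Complex.I) :
    2 * Real.cosh (dist z w) = (p⁻¹ * q).trace := by
  have hp11 : 0 < p 1 1 := hp.diag_pos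
  have hq11 : 0 < q 1 1 := hq.diag_pos
  have hdp' : p 0 0 * p 1 1 - p 1 0 ^ 2 = 1 := by
    rw [← hdp, det_fin_two, ← hp.isHermitian.apply 1 0, star_trivial]; ring
  have hdq' : q 0 0 * q 1 1 - q 1 0 ^ 2 = 1 := by
    rw [← hdq, det_fin_two, ← hq.isHermitian.apply 1 0, star_trivial]; ring
  have hzre : z.re = p 1 0 / p 1 1 := by simp [← UpperHalfPlane.coe_re, hz]
  have hzim : z.im = 1 / p 1 1 := by simp [← UpperHalfPlane.coe_im, hz]
  have hwre : w.re = q 1 0 / q 1 1 := by simp [← UpperHalfPlane.coe_re, hw]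
  have hwim : w.im = 1 / q 1 1 := by simp [← UpperHalfPlane.coe_im, hw]
  rw [trace_inv_mul_fin_two hp.isHermitian hq.isHermitian hdp, UpperHalfPlane.cosh_dist', hzre,
    hzim, hwre, hwim]
  field_simp
  linear_combination -(q 1 1) ^ 2 * hdp' - (p 1 1) ^ 2 * hdq'

/-- The determinant-1 submanifold of PD(2) is the hyperbolic plane rescaled by √2:
under the map `[[x,w],[w,y]] ↦ w/y + i/y` into the upper half-plane, the Riemannian
distance equals `√2` times the hyperbolic distance. -/
theorem ballhull_stmt7 (p q : Matrix (Fin 2) (Fin 2) ℝ) (hp : p.PosDef) (hq : q.PosDef)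
    (hdp : p.det = 1) (hdq : q.det = 1)
    (zp zq : UpperHalfPlane)
    (hzp : (zp : ℂ) = (p 1 0) / (p 1 1) + (1 / (p 1 1)) * Complex.I)
    (hzq : (zq : ℂ) = (q 1 0) / (q 1 1) + (1 / (q 1 1)) * Complex.I) :
    pdDist p q = Real.sqrt 2 * dist zp zq := by
  have hsq := hp.posSemidef.pdSqrt_mul_self
  have hA := hq.posSemidef.inv_mul_mul_inv hp.posSemidef.posSemidef_pdSqrt.1
  have hdetA : ((pdSqrt p)⁻¹ * q * (pdSqrt p)⁻¹).det = 1 := by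
    rw [det_inv_mul_mul_inv, hsq, hdp, hdq, div_one]
  have htrA : ((pdSqrt p)⁻¹ * q * (pdSqrt p)⁻¹).trace / 2 = Real.cosh (dist zp zq) := by
    rw [trace_inv_mul_mul_inv, hsq,
      ← UpperHalfPlane.two_mul_cosh_dist_eq_trace_inv_mul hp hq hdp hdq hzp hzq,
      mul_div_cancel_left₀ _ two_ne_zero]
  rw [pdDist, symEigenvalues, dif_pos hA.1, hA.sqrt_sum_log_sq_eigenvalues_fin_two hdetA, htrA,
    Real.arcosh_cosh dist_nonneg]
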